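/- Let m ≥ 2 and n be positive integers, and let π ∈ S_n be a permutation of order exactly m. Then for all distinct s, s′ ∈ ℤ_m, the matrix product ρ_π^{(s)} · ρ_π^{(s′)} is the zero matrix; that is, the m quantum states ρ_π^{(0)}, …, ρ_π^{(m−1)} have pairwise orthogonal supports (this is the mathematical content of the generalized distinguishing algorithm decrypting ρ_π^{(s)} to s when π is known). -/
import Mathlib

open Finset

/-- The vector `Φ_{π,s}^σ = (1/√m) Σ_{t=0}^{m−1} ω_m^{st} e_{σπ^t}` in `ℂ^{S_n}`,
where `ω_m = e^{2πi/m}`. -/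
noncomputable def PhiVec (n m : ℕ) (π σ : Equiv.Perm (Fin n)) (s : ZMod m) :
    Equiv.Perm (Fin n) → ℂ :=
  fun τ => (1 / (Real.sqrt m : ℂ)) *
    ∑ t ∈ Finset.range m,
      Complex.exp (2 * Real.pi * Complex.I / m) ^ (s.val * t) *
        (if τ = σ * π ^ t then 1 else 0)

/-- The quantum state `ρ_π^{(s)} = (1/n!) Σ_{σ∈S_n} Φ_{π,s}^σ (Φ_{π,s}^σ)†` as an
`n!×n!` complex matrix indexed by `S_n`. -/
noncomputable def rhoCyc (n m : ℕ) (π : Equiv.Perm (Fin n)) (s : ZMod m) :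
    Matrix (Equiv.Perm (Fin n)) (Equiv.Perm (Fin n)) ℂ :=
  Matrix.of fun a b =>
    ((Nat.factorial n : ℂ))⁻¹ *
      ∑ σ : Equiv.Perm (Fin n),
        PhiVec n m π σ s a * (starRingEnd ℂ) (PhiVec n m π σ s b)

/-! ### Auxiliary definitions and lemmas -/

/-- `ω_m = e^{2πi/m}`. -/
noncomputable def omC (m : ℕ) : ℂ := Complex.exp (2 * Real.pi * Complex.I / m)

/-- The character `u ↦ ω_m^{u}` on `ZMod m`. -/
noncomputable def Fm (m : ℕ) (u : ZMod m) : ℂ := omC m ^ u.val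

/-- The "power of π" map `u ↦ π^u` on `ZMod m`. -/
def Pm (n m : ℕ) (π : Equiv.Perm (Fin n)) (u : ZMod m) : Equiv.Perm (Fin n) := π ^ u.val

lemma omC_pow_self (m : ℕ) (hm : m ≠ 0) : omC m ^ m = 1 :=
  (Complex.isPrimitiveRoot_exp m hm).pow_eq_one

lemma omC_pow_mod (m : ℕ) (hm : m ≠ 0) (a : ℕ) : omC m ^ a = omC m ^ (a % m) := by
  conv_lhs => rw [← Nat.div_add_mod a m]
  rw [pow_add, pow_mul, omC_pow_self m hm, one_pow, one_mul]

lemma Fm_add (m : ℕ) [NeZero m] (u v : ZMod m) : Fm m (u + v) = Fm m u * Fm m v := by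
  rw [Fm, Fm, Fm, ← pow_add, ZMod.val_add, ← omC_pow_mod m (NeZero.ne m)]

lemma Fm_zero (m : ℕ) [NeZero m] : Fm m 0 = 1 := by
  rw [Fm, ZMod.val_zero, pow_zero]

lemma Fm_ne_zero (m : ℕ) (u : ZMod m) : Fm m u ≠ 0 :=
  pow_ne_zero _ (Complex.exp_ne_zero _)

lemma Fm_conj (m : ℕ) [NeZero m] (u : ZMod m) :
    (starRingEnd ℂ) (Fm m u) = Fm m (-u) := by
  have hcω : (starRingEnd ℂ) (omC m) * omC m = 1 := by
    rw [omC, ← Complex.exp_conj, ← Complex.exp_add]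
    have h : (starRingEnd ℂ) (2 * (Real.pi : ℂ) * Complex.I / (m : ℂ)) +
        2 * (Real.pi : ℂ) * Complex.I / (m : ℂ) = 0 := by
      rw [map_div₀, map_mul, map_mul, Complex.conj_I, Complex.conj_ofNat,
        Complex.conj_ofReal, Complex.conj_natCast]
      ring
    rw [h, Complex.exp_zero]
  have h1 : (starRingEnd ℂ) (Fm m u) * Fm m u = 1 := by
    rw [Fm, map_pow, ← mul_pow, hcω, one_pow]
  have h2 : Fm m (-u) * Fm m u = 1 := by
    rw [← Fm_add, neg_add_cancel, Fm_zero]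
  exact mul_right_cancel₀ (Fm_ne_zero m u) (h1.trans h2.symm)

lemma Pm_add (n m : ℕ) [NeZero m] (π : Equiv.Perm (Fin n)) (hπm : π ^ m = 1)
    (u v : ZMod m) : Pm n m π (u + v) = Pm n m π u * Pm n m π v := by
  rw [Pm, Pm, Pm, ← pow_add, ZMod.val_add]
  conv_rhs => rw [← Nat.div_add_mod (u.val + v.val) m]
  rw [pow_add, pow_mul, hπm, one_pow, one_mul]

lemma zmodSum (m : ℕ) [NeZero m] (g : ZMod m → ℂ) :
    ∑ t ∈ Finset.range m, g ↑t = ∑ u : ZMod m, g u :=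
  Finset.sum_bij' (fun t _ => ((t : ZMod m))) (fun u _ => u.val)
    (fun _ _ => Finset.mem_univ _) (fun u _ => Finset.mem_range.mpr u.val_lt)
    (fun t ht => ZMod.val_cast_of_lt (Finset.mem_range.mp ht))
    (fun u _ => ZMod.natCast_zmod_val u)
    (fun t ht => rfl)

lemma char_sum (m : ℕ) [NeZero m] (d : ZMod m) (hd : d ≠ 0) :
    ∑ u : ZMod m, Fm m (d * u) = 0 := by
  have hm0 : m ≠ 0 := NeZero.ne m
  have hne : omC m ^ d.val ≠ 1 := by
    intro h
    have hdvd := ((Complex.isPrimitiveRoot_exp m hm0).pow_eq_one_iff_dvd d.val).mp h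
    have hpos : 0 < d.val :=
      Nat.pos_of_ne_zero (fun h0 => hd ((ZMod.val_eq_zero d).mp h0))
    exact absurd (Nat.le_of_dvd hpos hdvd) (not_le.mpr d.val_lt)
  calc ∑ u : ZMod m, Fm m (d * u)
      = ∑ u : ZMod m, (fun w : ZMod m => (omC m ^ d.val) ^ w.val) u :=
        Finset.sum_congr rfl fun u _ => by
          rw [Fm, ZMod.val_mul, ← omC_pow_mod m hm0, pow_mul]
    _ = ∑ t ∈ Finset.range m, (fun w : ZMod m => (omC m ^ d.val) ^ w.val) ↑t :=
        (zmodSum m _).symm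
    _ = ∑ t ∈ Finset.range m, (omC m ^ d.val) ^ t :=
        Finset.sum_congr rfl fun t ht => by
          simp only []
          rw [ZMod.val_cast_of_lt (Finset.mem_range.mp ht)]
    _ = 0 := by
        rw [geom_sum_eq hne m, ← pow_mul, mul_comm, pow_mul, omC_pow_self m hm0,
          one_pow, sub_self, zero_div]

lemma phi_eq (n m : ℕ) [NeZero m] (π σ : Equiv.Perm (Fin n)) (s : ZMod m)
    (τ : Equiv.Perm (Fin n)) :
    PhiVec n m π σ s τ = (1 / (Real.sqrt m : ℂ)) *
      ∑ u : ZMod m, Fm m (s * u) * (if τ = σ * Pm n m π u then 1 else 0) := by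
  have hm0 : m ≠ 0 := NeZero.ne m
  rw [PhiVec]
  congr 1
  rw [← zmodSum m (fun u => Fm m (s * u) * (if τ = σ * Pm n m π u then 1 else 0))]
  refine Finset.sum_congr rfl fun t ht => ?_
  have htm := Finset.mem_range.mp ht
  have hv : ((t : ZMod m)).val = t := ZMod.val_cast_of_lt htm
  have h1 : Fm m (s * (t : ZMod m)) = omC m ^ (s.val * t) := by
    rw [Fm, ZMod.val_mul, hv, ← omC_pow_mod m hm0]
  have h2 : Pm n m π (t : ZMod m) = π ^ t := by rw [Pm, hv]
  rw [h1, h2, omC]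

lemma delta_sum {α : Type*} [Fintype α] [DecidableEq α] (x y : α) :
    (∑ c : α, (if c = x then (1:ℂ) else 0) * (if c = y then 1 else 0))
      = if x = y then 1 else 0 := by
  simp only [ite_mul, one_mul, zero_mul, Finset.sum_ite_eq', Finset.mem_univ, if_true]

lemma key (n m : ℕ) [NeZero m] (π : Equiv.Perm (Fin n)) (hπm : π ^ m = 1)
    (s s' : ZMod m) (hss' : s ≠ s') (σ σ' : Equiv.Perm (Fin n)) :
    ∑ c : Equiv.Perm (Fin n),
      (starRingEnd ℂ) (PhiVec n m π σ s c) * PhiVec n m π σ' s' c = 0 := by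
  set C : ℂ := (1 / (Real.sqrt m : ℂ)) with hC
  -- main double sum vanishes
  have main : ∑ t : ZMod m, ∑ t' : ZMod m,
      (Fm m (-(s * t)) * Fm m (s' * t')) *
        (if σ * Pm n m π t = σ' * Pm n m π t' then 1 else 0) = 0 := by
    rw [Finset.sum_comm]
    have step : ∀ t' : ZMod m, ∑ t : ZMod m,
        (Fm m (-(s * t)) * Fm m (s' * t')) *
          (if σ * Pm n m π t = σ' * Pm n m π t' then 1 else 0)
        = ∑ u : ZMod m,
            (Fm m (-(s * u)) * (if σ * Pm n m π u = σ' then 1 else 0)) *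
              Fm m ((s' - s) * t') := by
      intro t'
      rw [← Equiv.sum_comp (Equiv.addRight t')
        (fun t => (Fm m (-(s * t)) * Fm m (s' * t')) *
          (if σ * Pm n m π t = σ' * Pm n m π t' then 1 else 0))]
      refine Finset.sum_congr rfl fun u _ => ?_
      simp only [Equiv.coe_addRight]
      have hcond : (σ * Pm n m π (u + t') = σ' * Pm n m π t') ↔ (σ * Pm n m π u = σ') := by
        rw [Pm_add n m π hπm, ← mul_assoc]; exact mul_left_inj _
      simp only [hcond]
      have hF : Fm m (-(s * t')) * Fm m (s' * t') = Fm m ((s' - s) * t') := by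
        rw [← Fm_add]; congr 1; ring
      rw [mul_add s u t', neg_add, Fm_add, ← hF]
      ring
    calc ∑ t' : ZMod m, ∑ t : ZMod m,
          (Fm m (-(s * t)) * Fm m (s' * t')) *
            (if σ * Pm n m π t = σ' * Pm n m π t' then 1 else 0)
        = ∑ t' : ZMod m, ∑ u : ZMod m,
            (Fm m (-(s * u)) * (if σ * Pm n m π u = σ' then 1 else 0)) *
              Fm m ((s' - s) * t') := Finset.sum_congr rfl fun t' _ => step t'
      _ = (∑ u : ZMod m,
            Fm m (-(s * u)) * (if σ * Pm n m π u = σ' then 1 else 0)) *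
            ∑ t' : ZMod m, Fm m ((s' - s) * t') := by
          rw [Finset.sum_mul_sum, Finset.sum_comm]
      _ = 0 := by
          rw [char_sum m (s' - s) (sub_ne_zero_of_ne (Ne.symm hss')), mul_zero]
  -- reduce the inner product to the main double sum
  calc ∑ c : Equiv.Perm (Fin n),
        (starRingEnd ℂ) (PhiVec n m π σ s c) * PhiVec n m π σ' s' c
      = ∑ c : Equiv.Perm (Fin n),
          ((starRingEnd ℂ) C * C) *
          ((∑ t : ZMod m, Fm m (-(s * t)) * (if c = σ * Pm n m π t then 1 else 0)) *
           (∑ t' : ZMod m, Fm m (s' * t') * (if c = σ' * Pm n m π t' then 1 else 0))) := by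
        refine Finset.sum_congr rfl fun c _ => ?_
        rw [phi_eq, phi_eq, map_mul, map_sum, mul_mul_mul_comm]
        congr 2
        refine Finset.sum_congr rfl fun t _ => ?_
        rw [map_mul, Fm_conj]
        congr 1
        split <;> simp
    _ = ∑ c : Equiv.Perm (Fin n), ∑ t : ZMod m, ∑ t' : ZMod m,
          ((starRingEnd ℂ) C * C) *
            ((Fm m (-(s * t)) * (if c = σ * Pm n m π t then 1 else 0)) *
             (Fm m (s' * t') * (if c = σ' * Pm n m π t' then 1 else 0))) := by
        refine Finset.sum_congr rfl fun c _ => ?_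
        rw [Finset.sum_mul_sum, Finset.mul_sum]
        exact Finset.sum_congr rfl fun t _ => by rw [Finset.mul_sum]
    _ = ∑ t : ZMod m, ∑ t' : ZMod m, ∑ c : Equiv.Perm (Fin n),
          ((starRingEnd ℂ) C * C) *
            ((Fm m (-(s * t)) * (if c = σ * Pm n m π t then 1 else 0)) *
             (Fm m (s' * t') * (if c = σ' * Pm n m π t' then 1 else 0))) := by
        rw [Finset.sum_comm]
        exact Finset.sum_congr rfl fun t _ => Finset.sum_comm
    _ = ∑ t : ZMod m, ∑ t' : ZMod m,
          ((starRingEnd ℂ) C * C) *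
            ((Fm m (-(s * t)) * Fm m (s' * t')) *
              (if σ * Pm n m π t = σ' * Pm n m π t' then 1 else 0)) := by
        refine Finset.sum_congr rfl fun t _ => Finset.sum_congr rfl fun t' _ => ?_
        have h : ∑ c : Equiv.Perm (Fin n),
            ((starRingEnd ℂ) C * C) *
              ((Fm m (-(s * t)) * (if c = σ * Pm n m π t then 1 else 0)) *
               (Fm m (s' * t') * (if c = σ' * Pm n m π t' then 1 else 0)))
          = ((starRingEnd ℂ) C * C) * ((Fm m (-(s * t)) * Fm m (s' * t')) *
              ∑ c : Equiv.Perm (Fin n),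
                (if c = σ * Pm n m π t then (1:ℂ) else 0) *
                (if c = σ' * Pm n m π t' then 1 else 0)) := by
          rw [Finset.mul_sum, Finset.mul_sum]
          exact Finset.sum_congr rfl fun c _ => by ring
        rw [h, delta_sum]
    _ = ((starRingEnd ℂ) C * C) * ∑ t : ZMod m, ∑ t' : ZMod m,
          (Fm m (-(s * t)) * Fm m (s' * t')) *
            (if σ * Pm n m π t = σ' * Pm n m π t' then 1 else 0) := by
        rw [Finset.mul_sum]
        exact Finset.sum_congr rfl fun t _ => (Finset.mul_sum _ _ _).symm
    _ = 0 := by rw [main, mul_zero]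

/-- If `π` has order exactly `m`, the states `ρ_π^{(0)}, …, ρ_π^{(m−1)}` have pairwise
orthogonal supports: for `s ≠ s′`, the matrix product `ρ_π^{(s)} · ρ_π^{(s′)}` is
the zero matrix. -/
theorem rhoCyc_mul_rhoCyc_eq_zero (n m : ℕ) (hn : 0 < n) (hm : 2 ≤ m)
    (π : Equiv.Perm (Fin n)) (hπ : orderOf π = m) (s s' : ZMod m) (hss' : s ≠ s') :
    rhoCyc n m π s * rhoCyc n m π s' = 0 := by
  haveI : NeZero m := ⟨by omega⟩
  have hπm : π ^ m = 1 := by rw [← hπ]; exact pow_orderOf_eq_one π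
  ext a b
  rw [Matrix.mul_apply, Matrix.zero_apply]
  simp only [rhoCyc, Matrix.of_apply]
  set K : ℂ := ((Nat.factorial n : ℂ))⁻¹ with hK
  calc ∑ c : Equiv.Perm (Fin n),
        (K * ∑ σ : Equiv.Perm (Fin n),
          PhiVec n m π σ s a * (starRingEnd ℂ) (PhiVec n m π σ s c)) *
        (K * ∑ σ' : Equiv.Perm (Fin n),
          PhiVec n m π σ' s' c * (starRingEnd ℂ) (PhiVec n m π σ' s' b))
      = ∑ c : Equiv.Perm (Fin n), ∑ σ : Equiv.Perm (Fin n), ∑ σ' : Equiv.Perm (Fin n),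
          (K * K) * (PhiVec n m π σ s a * (starRingEnd ℂ) (PhiVec n m π σ' s' b)) *
            ((starRingEnd ℂ) (PhiVec n m π σ s c) * PhiVec n m π σ' s' c) := by
        refine Finset.sum_congr rfl fun c _ => ?_
        rw [mul_mul_mul_comm, Finset.sum_mul_sum, Finset.mul_sum]
        refine Finset.sum_congr rfl fun σ _ => ?_
        rw [Finset.mul_sum]
        exact Finset.sum_congr rfl fun σ' _ => by ring
    _ = ∑ σ : Equiv.Perm (Fin n), ∑ σ' : Equiv.Perm (Fin n),
          (K * K) * (PhiVec n m π σ s a * (starRingEnd ℂ) (PhiVec n m π σ' s' b)) *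
            ∑ c : Equiv.Perm (Fin n),
              (starRingEnd ℂ) (PhiVec n m π σ s c) * PhiVec n m π σ' s' c := by
        rw [Finset.sum_comm]
        refine Finset.sum_congr rfl fun σ _ => ?_
        rw [Finset.sum_comm]
        exact Finset.sum_congr rfl fun σ' _ => (Finset.mul_sum _ _ _).symm
    _ = 0 := by
        refine Finset.sum_eq_zero fun σ _ => Finset.sum_eq_zero fun σ' _ => ?_
        rw [key n m π hπm s s' hss' σ σ', mul_zero]
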